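/- arXiv:1804.03098 — 8 statements merged into one kernel-verified Lean document; each statement's English description precedes it below -/
import Mathlib

section
/- If c₁ ≥ c₂ > 0 are real numbers, then the function t ↦ sinh(c₁ t)/sinh(c₂ t) is monotone increasing on (0, ∞). -/
lemma aux1 (v : ℝ) (hv : 0 ≤ v) : Real.sinh v ≤ v * Real.cosh v := by
  have h : MonotoneOn (fun x => x * Real.cosh x - Real.sinh x) (Set.Ici 0) := by
    apply monotoneOn_of_deriv_nonneg (convex_Ici 0)
    · fun_prop
    · intro x hx
      exact (((differentiable_id.mul Real.differentiable_cosh).sub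
        Real.differentiable_sinh) x).differentiableWithinAt
    · intro x hx
      rw [interior_Ici] at hx
      have hd : HasDerivAt (fun x => x * Real.cosh x - Real.sinh x)
          (1 * Real.cosh x + x * Real.sinh x - Real.cosh x) x :=
        ((hasDerivAt_id x).mul (Real.hasDerivAt_cosh x)).sub (Real.hasDerivAt_sinh x)
      rw [hd.deriv]
      have := Real.sinh_nonneg_iff.mpr hx.le
      nlinarith [mul_nonneg (le_of_lt hx.out) this]
  have h0 : (0:ℝ) ∈ Set.Ici (0:ℝ) := Set.self_mem_Ici
  have := h h0 hv hv
  simp at this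
  linarith

lemma aux2 (u v : ℝ) (hv : 0 ≤ v) (huv : v ≤ u) : u * Real.sinh v ≤ v * Real.sinh u := by
  have h : MonotoneOn (fun x => v * Real.sinh x - x * Real.sinh v) (Set.Ici v) := by
    apply monotoneOn_of_deriv_nonneg (convex_Ici v)
    · fun_prop
    · intro x hx
      exact (((Real.differentiable_sinh.const_mul v).sub
        (differentiable_id.mul (differentiable_const _))) x).differentiableWithinAt
    · intro x hx
      rw [interior_Ici] at hx
      have hd : HasDerivAt (fun x => v * Real.sinh x - x * Real.sinh v)
          (v * Real.cosh x - 1 * Real.sinh v) x :=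
        (((Real.hasDerivAt_sinh x).const_mul v).sub ((hasDerivAt_id x).mul_const _))
      rw [hd.deriv]
      have h1 : Real.cosh v ≤ Real.cosh x := by
        rw [Real.cosh_le_cosh]
        rw [abs_of_nonneg hv, abs_of_nonneg (hv.trans hx.le)]
        exact hx.le
      have h2 := aux1 v hv
      nlinarith [Real.cosh_pos v]
  have := h (Set.self_mem_Ici) huv huv
  simp at this
  linarith

lemma aux3 (a b : ℝ) (hb : 0 < b) (hab : b ≤ a) :
    b * (Real.sinh a * Real.cosh b) ≤ a * (Real.cosh a * Real.sinh b) := by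
  have key := aux2 (a + b) (a - b) (by linarith) (by linarith)
  rw [Real.sinh_add, Real.sinh_sub] at key
  nlinarith

theorem sinh_ratio_monotone (c₁ c₂ : ℝ) (h₁ : c₁ ≥ c₂) (h₂ : c₂ > 0) :
    MonotoneOn (fun t : ℝ => Real.sinh (c₁ * t) / Real.sinh (c₂ * t)) (Set.Ioi (0 : ℝ)) := by
  have h₁' : c₁ > 0 := lt_of_lt_of_le h₂ h₁
  have hne : ∀ t ∈ Set.Ioi (0:ℝ), Real.sinh (c₂ * t) ≠ 0 := by
    intro t ht
    exact ne_of_gt (Real.sinh_pos_iff.mpr (mul_pos h₂ ht))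
  apply monotoneOn_of_deriv_nonneg (convex_Ioi 0)
  · apply ContinuousOn.div
    · fun_prop
    · fun_prop
    · exact hne
  · rw [interior_Ioi]
    intro t ht
    have hd : HasDerivAt (fun t : ℝ => Real.sinh (c₁ * t) / Real.sinh (c₂ * t))
        ((Real.cosh (c₁ * t) * (c₁ * 1) * Real.sinh (c₂ * t) -
          Real.sinh (c₁ * t) * (Real.cosh (c₂ * t) * (c₂ * 1))) / (Real.sinh (c₂ * t))^2) t := by
      apply HasDerivAt.div
      · exact (Real.hasDerivAt_sinh (c₁ * t)).comp t ((hasDerivAt_id t).const_mul c₁)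
      · exact (Real.hasDerivAt_sinh (c₂ * t)).comp t ((hasDerivAt_id t).const_mul c₂)
      · exact hne t ht
    exact hd.differentiableAt.differentiableWithinAt
  · rw [interior_Ioi]
    intro t ht
    have hd : HasDerivAt (fun t : ℝ => Real.sinh (c₁ * t) / Real.sinh (c₂ * t))
        ((Real.cosh (c₁ * t) * (c₁ * 1) * Real.sinh (c₂ * t) -
          Real.sinh (c₁ * t) * (Real.cosh (c₂ * t) * (c₂ * 1))) / (Real.sinh (c₂ * t))^2) t := by
      apply HasDerivAt.div
      · exact (Real.hasDerivAt_sinh (c₁ * t)).comp t ((hasDerivAt_id t).const_mul c₁)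
      · exact (Real.hasDerivAt_sinh (c₂ * t)).comp t ((hasDerivAt_id t).const_mul c₂)
      · exact hne t ht
    rw [hd.deriv]
    apply div_nonneg _ (sq_nonneg _)
    have key := aux3 (c₁ * t) (c₂ * t) (mul_pos h₂ ht)
      (mul_le_mul_of_nonneg_right h₁ ht.le)
    nlinarith [key, Set.mem_Ioi.mp ht]
end

section
/- If c₁ ≥ c₂ > 0 are real numbers, then the function t ↦ coth(c₁ t)/coth(c₂ t) is monotone increasing on (0, ∞). -/
/-- The real hyperbolic cotangent. -/
noncomputable def coth (x : ℝ) : ℝ := Real.cosh x / Real.sinh x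

/-! The derivative of the ratio is
`(c₂ sinh (2c₁t) - c₁ sinh (2c₂t)) / (2 (sinh (c₁t) cosh (c₂t))²)`. Its numerator is
nonnegative because `sinh` is convex on `[0, ∞)` and vanishes at `0`, so that `sinh x / x`
is increasing there. -/

open Real Set

lemma convexOn_sinh_Ici : ConvexOn ℝ (Ici 0) sinh :=
  MonotoneOn.convexOn_of_deriv (convex_Ici 0) continuous_sinh.continuousOn
    differentiable_sinh.differentiableOn
    (by rw [Real.deriv_sinh]; exact cosh_strictMonoOn.monotoneOn.mono interior_subset)

lemma monotoneOn_sinh_div_self : MonotoneOn (fun x => sinh x / x) (Ioi 0) := by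
  intro x hx y hy hxy
  simpa only [sinh_zero, sub_zero] using convexOn_sinh_Ici.secant_mono self_mem_Ici
    (mem_Ici_of_Ioi hx) (mem_Ici_of_Ioi hy) hx.ne' hy.ne' hxy

lemma mul_sinh_mul_le_mul_sinh_mul {a b x : ℝ} (ha : 0 < a) (hab : a ≤ b) (hx : 0 ≤ x) :
    b * sinh (a * x) ≤ a * sinh (b * x) := by
  rcases hx.eq_or_lt with rfl | hx
  · simp only [mul_zero, sinh_zero, le_refl]
  have hb : 0 < b := ha.trans_le hab
  have h := monotoneOn_sinh_div_self (mul_pos ha hx) (mul_pos hb hx)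
    (mul_le_mul_of_nonneg_right hab hx.le)
  rw [div_le_div_iff₀ (mul_pos ha hx) (mul_pos hb hx)] at h
  exact le_of_mul_le_mul_right (by linarith) hx

lemma hasDerivAt_coth {x : ℝ} (hx : x ≠ 0) : HasDerivAt coth (-1 / sinh x ^ 2) x := by
  refine ((hasDerivAt_cosh x).div (hasDerivAt_sinh x) (sinh_ne_zero.mpr hx)).congr_deriv ?_
  rw [← cosh_sq_sub_sinh_sq x]
  ring

lemma hasDerivAt_coth_mul_div_coth_mul {a b t : ℝ} (ha : a * t ≠ 0) (hb : b * t ≠ 0) :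
    HasDerivAt (fun t => coth (a * t) / coth (b * t))
      ((b * sinh (a * (2 * t)) - a * sinh (b * (2 * t))) /
        (2 * (sinh (a * t) * cosh (b * t)) ^ 2)) t := by
  have hsa : sinh (a * t) ≠ 0 := sinh_ne_zero.mpr ha
  have hsb : sinh (b * t) ≠ 0 := sinh_ne_zero.mpr hb
  have hcb : cosh (b * t) ≠ 0 := (cosh_pos _).ne'
  have hderiv (c : ℝ) (hc : c * t ≠ 0) :
      HasDerivAt (fun t => coth (c * t)) (-1 / sinh (c * t) ^ 2 * c) t :=
    (hasDerivAt_coth hc).comp t (((hasDerivAt_id t).const_mul c).congr_deriv (mul_one c))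
  have hcoth : coth (b * t) ≠ 0 := div_ne_zero hcb hsb
  refine ((hderiv a ha).div (hderiv b hb) hcoth).congr_deriv ?_
  rw [show a * (2 * t) = 2 * (a * t) by ring, show b * (2 * t) = 2 * (b * t) by ring,
    sinh_two_mul, sinh_two_mul]
  simp only [coth]
  generalize sinh (a * t) = sa, sinh (b * t) = sb at *
  field_simp
  ring

theorem coth_ratio_monotone (c₁ c₂ : ℝ) (h₁ : c₁ ≥ c₂) (h₂ : c₂ > 0) :
    MonotoneOn (fun t : ℝ => coth (c₁ * t) / coth (c₂ * t)) (Set.Ioi (0 : ℝ)) := by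
  have hc₁ : 0 < c₁ := h₂.trans_le h₁
  have hderiv (t : ℝ) (ht : t ∈ Ioi (0 : ℝ)) :=
    hasDerivAt_coth_mul_div_coth_mul (mul_pos hc₁ ht).ne' (mul_pos h₂ ht).ne'
  refine monotoneOn_of_hasDerivWithinAt_nonneg (convex_Ioi 0)
    (fun t ht => (hderiv t ht).continuousAt.continuousWithinAt)
    (fun t ht => (hderiv t (interior_subset ht)).hasDerivWithinAt) fun t ht => ?_
  rw [interior_Ioi, mem_Ioi] at ht
  have key := mul_sinh_mul_le_mul_sinh_mul h₂ h₁ (by positivity : (0 : ℝ) ≤ 2 * t)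
  exact div_nonneg (sub_nonneg.mpr key) (by positivity)
end

section
/- Let λ_{i1} > 0, λ_{i2} ≥ 0, μ_i > 0 for i = 1, 2. If μ₁ ≥ μ₂, λ₁₁ ≤ λ₂₁ and 2(λ₂₁ − λ₁₁) − λ₁₂ + λ₂₂ + μ₂ − μ₁ ≥ 0, then the ratio t ↦ φ^W_1(t)/φ^W_2(t) is monotone increasing on (0, ∞), i.e. τ^W_1 ≥_lr τ^W_2. -/
/-- `a_i = sqrt((λ_{i2} + μ_i)² + 4 λ_{i1} μ_i)` for the warm standby system. -/
noncomputable def aW (l1 l2 m : ℝ) : ℝ := Real.sqrt ((l2 + m) ^ 2 + 4 * l1 * m)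

/-- Density of the lifetime of the Markovian two-unit warm standby system. -/
noncomputable def phiW (l1 l2 m t : ℝ) : ℝ :=
  Real.exp (-((2 * l1 + l2 + m) * t / 2)) * (2 * l1 * (l1 + l2) / aW l1 l2 m) *
    Real.sinh (aW l1 l2 m * t / 2)

/-!
Cancelling the constant factors, `φ₁(t)/φ₂(t) = K · e^{ct} sinh(αt) / sinh(βt)` with `K ≥ 0`,
`α = a₁/2`, `β = a₂/2` and `c = Δ/2`, where `Δ ≥ 0` is the left-hand side of the hypothesis on the
rates. Such a ratio increases on `(0, ∞)` as soon as `β ≤ c + α`: the sign of its derivative is that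
of `G(t) = c sinh(αt) sinh(βt) + α cosh(αt) sinh(βt) - β sinh(αt) cosh(βt)`, which vanishes at `0`
and is nondecreasing. Squaring shows that the hypotheses on the rates give `a₂ ≤ a₁ + Δ`.
-/

open Real Set

section SinhRatio

variable {α β c : ℝ}

/-- `e^{-ct} sinh²(βt)` times the derivative of `t ↦ e^{ct} sinh(αt) / sinh(βt)`. -/
noncomputable def sinhRatioDerivNum (α β c t : ℝ) : ℝ :=
  c * sinh (α * t) * sinh (β * t) + α * cosh (α * t) * sinh (β * t)
    - β * sinh (α * t) * cosh (β * t)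

theorem hasDerivAt_sinhRatioDerivNum (α β c x : ℝ) :
    HasDerivAt (sinhRatioDerivNum α β c)
      (c * (α * cosh (α * x) * sinh (β * x) + β * sinh (α * x) * cosh (β * x))
        + (α ^ 2 - β ^ 2) * sinh (α * x) * sinh (β * x)) x := by
  have hα := hasDerivAt_const_mul (x := x) α
  have hβ := hasDerivAt_const_mul (x := x) β
  exact (((hα.sinh.const_mul c).mul hβ.sinh).add ((hα.cosh.const_mul α).mul hβ.sinh)
    |>.sub ((hα.sinh.const_mul β).mul hβ.cosh)).congr_deriv (by ring)

theorem sinhRatioDerivNum_deriv_nonneg (hα : 0 ≤ α) (hβ : 0 ≤ β) (hc : 0 ≤ c)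
    (hβc : β ≤ c + α) {x : ℝ} (hx : 0 ≤ x) :
    0 ≤ c * (α * cosh (α * x) * sinh (β * x) + β * sinh (α * x) * cosh (β * x))
      + (α ^ 2 - β ^ 2) * sinh (α * x) * sinh (β * x) := by
  have hsα : 0 ≤ sinh (α * x) := sinh_nonneg_iff.2 (mul_nonneg hα hx)
  have hsβ : 0 ≤ sinh (β * x) := sinh_nonneg_iff.2 (mul_nonneg hβ hx)
  have hcα : sinh (α * x) ≤ cosh (α * x) := (sinh_lt_cosh _).le
  have hcβ : sinh (β * x) ≤ cosh (β * x) := (sinh_lt_cosh _).le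
  have hsum : 0 ≤ α * cosh (α * x) * sinh (β * x) + β * sinh (α * x) * cosh (β * x) := by
    have := hsα.trans hcα
    have := hsβ.trans hcβ
    positivity
  rcases le_total β α with hβα | hαβ
  · have : 0 ≤ α ^ 2 - β ^ 2 := by nlinarith
    positivity
  · -- `c ≥ β - α` and `α² - β² = -(β - α)(β + α)` leave `(β - α)` times a sum of two
    -- nonnegative terms.
    calc 0 ≤ (β - α) * (α * sinh (β * x) * (cosh (α * x) - sinh (α * x))
            + β * sinh (α * x) * (cosh (β * x) - sinh (β * x))) := by
          have := sub_nonneg.2 hcα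
          have := sub_nonneg.2 hcβ
          have := sub_nonneg.2 hαβ
          positivity
      _ = (β - α) * (α * cosh (α * x) * sinh (β * x) + β * sinh (α * x) * cosh (β * x))
            + (α ^ 2 - β ^ 2) * sinh (α * x) * sinh (β * x) := by ring
      _ ≤ _ := by gcongr; linarith

theorem sinhRatioDerivNum_nonneg (hα : 0 ≤ α) (hβ : 0 ≤ β) (hc : 0 ≤ c)
    (hβc : β ≤ c + α) {t : ℝ} (ht : 0 ≤ t) : 0 ≤ sinhRatioDerivNum α β c t := by
  have hmono : MonotoneOn (sinhRatioDerivNum α β c) (Ici 0) :=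
    monotoneOn_of_hasDerivWithinAt_nonneg (convex_Ici 0)
      (fun x _ ↦ (hasDerivAt_sinhRatioDerivNum α β c x).continuousAt.continuousWithinAt)
      (fun x _ ↦ (hasDerivAt_sinhRatioDerivNum α β c x).hasDerivWithinAt)
      (fun x hx ↦ sinhRatioDerivNum_deriv_nonneg hα hβ hc hβc (interior_subset hx))
  simpa [sinhRatioDerivNum] using hmono self_mem_Ici ht ht

theorem hasDerivAt_exp_mul_sinh_div_sinh (α β c : ℝ) {x : ℝ} (hx : sinh (β * x) ≠ 0) :
    HasDerivAt (fun t ↦ exp (c * t) * sinh (α * t) / sinh (β * t))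
      (exp (c * x) * sinhRatioDerivNum α β c x / sinh (β * x) ^ 2) x := by
  have hα := hasDerivAt_const_mul (x := x) α
  have hβ := hasDerivAt_const_mul (x := x) β
  have hc := hasDerivAt_const_mul (x := x) c
  refine ((hc.exp.mul hα.sinh).div hβ.sinh hx).congr_deriv ?_
  simp only [sinhRatioDerivNum, Pi.mul_apply]
  ring

theorem monotoneOn_exp_mul_sinh_div_sinh (hα : 0 ≤ α) (hβ : 0 < β) (hc : 0 ≤ c)
    (hβc : β ≤ c + α) :
    MonotoneOn (fun t ↦ exp (c * t) * sinh (α * t) / sinh (β * t)) (Ioi 0) := by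
  have hsinh : ∀ x ∈ Ioi (0 : ℝ), sinh (β * x) ≠ 0 :=
    fun x hx ↦ (sinh_pos_iff.2 (mul_pos hβ hx)).ne'
  refine monotoneOn_of_hasDerivWithinAt_nonneg (convex_Ioi 0)
    (fun x hx ↦ (hasDerivAt_exp_mul_sinh_div_sinh α β c (hsinh x hx)).continuousAt
      |>.continuousWithinAt)
    (fun x hx ↦ (hasDerivAt_exp_mul_sinh_div_sinh α β c
      (hsinh x (interior_subset hx))).hasDerivWithinAt) (fun x hx ↦ ?_)
  rw [interior_Ioi] at hx
  have := sinhRatioDerivNum_nonneg hα hβ.le hc hβc hx.le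
  positivity

end SinhRatio

theorem aW_nonneg (l1 l2 m : ℝ) : 0 ≤ aW l1 l2 m := sqrt_nonneg _

theorem aW_pos {l1 l2 m : ℝ} (hl1 : 0 ≤ l1) (hl2 : 0 ≤ l2) (hm : 0 < m) : 0 < aW l1 l2 m :=
  sqrt_pos.2 (by positivity)

theorem add_le_aW {l1 l2 m : ℝ} (hl1 : 0 ≤ l1) (hm : 0 ≤ m) : l2 + m ≤ aW l1 l2 m :=
  le_sqrt_of_sq_le (by nlinarith [mul_nonneg hl1 hm])

theorem aW_le_aW_add {l11 l12 l21 l22 m1 m2 : ℝ} (hl11 : 0 ≤ l11) (hl22 : 0 ≤ l22)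
    (hm1 : 0 ≤ m1) (hmu : m2 ≤ m1) (hlam : l11 ≤ l21)
    (hΔ : 0 ≤ 2 * (l21 - l11) - l12 + l22 + m2 - m1) :
    aW l21 l22 m2 ≤ aW l11 l12 m1 + (2 * (l21 - l11) - l12 + l22 + m2 - m1) := by
  have ha1 : aW l11 l12 m1 ^ 2 = (l12 + m1) ^ 2 + 4 * l11 * m1 := sq_sqrt (by positivity)
  have hp : l12 + m1 ≤ aW l11 l12 m1 := add_le_aW hl11 hm1
  refine sqrt_le_iff.2 ⟨by linarith [aW_nonneg l11 l12 m1], ?_⟩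
  nlinarith [mul_nonneg (sub_nonneg.2 hlam) hl22, mul_nonneg hl11 (sub_nonneg.2 hmu),
    mul_nonneg (sub_nonneg.2 hp) hΔ]

theorem phiW_div_phiW (l11 l12 m1 l21 l22 m2 t : ℝ) :
    phiW l11 l12 m1 t / phiW l21 l22 m2 t =
      2 * l11 * (l11 + l12) / aW l11 l12 m1 / (2 * l21 * (l21 + l22) / aW l21 l22 m2) *
        (exp ((2 * (l21 - l11) - l12 + l22 + m2 - m1) / 2 * t) *
          sinh (aW l11 l12 m1 / 2 * t) / sinh (aW l21 l22 m2 / 2 * t)) := by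
  simp only [phiW, mul_div_mul_comm, ← exp_sub]
  ring_nf

theorem warm_lr_sufficient (l11 l12 l21 l22 m1 m2 : ℝ)
    (h11 : 0 < l11) (h12 : 0 ≤ l12) (h21 : 0 < l21) (h22 : 0 ≤ l22)
    (hm1 : 0 < m1) (hm2 : 0 < m2)
    (hmu : m1 ≥ m2) (hlam : l11 ≤ l21)
    (hcond : 2 * (l21 - l11) - l12 + l22 + m2 - m1 ≥ 0) :
    MonotoneOn (fun t : ℝ => phiW l11 l12 m1 t / phiW l21 l22 m2 t) (Set.Ioi (0 : ℝ)) := by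
  have ha1 := aW_nonneg l11 l12 m1
  have ha2 := aW_pos h21.le h22 hm2
  have hK : 0 ≤ 2 * l11 * (l11 + l12) / aW l11 l12 m1 /
      (2 * l21 * (l21 + l22) / aW l21 l22 m2) := by
    positivity
  have hratio := monotoneOn_exp_mul_sinh_div_sinh (α := aW l11 l12 m1 / 2)
    (β := aW l21 l22 m2 / 2) (c := (2 * (l21 - l11) - l12 + l22 + m2 - m1) / 2)
    (by positivity) (by positivity) (by linarith)
    (by linarith [aW_le_aW_add h11.le h22 hm1.le hmu hlam hcond])
  simp_rw [phiW_div_phiW]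
  exact fun s hs t ht hst ↦ mul_le_mul_of_nonneg_left (hratio hs ht hst) hK
end

section
/- Let λ₁ > 0, λ₂ ≥ 0, μ > 0. For every fixed t ≥ 0, the function x ↦ φ^W(x + t)/φ^W(x) is monotone decreasing on (0, ∞); that is, the lifetime τ^W of the Markovian warm standby system belongs to the ageing class ILR (Increasing Likelihood Ratio). -/
theorem warm_ILR (l1 l2 m : ℝ) (h1 : 0 < l1) (h2 : 0 ≤ l2) (hm : 0 < m) :
    ∀ t ≥ (0 : ℝ),
      AntitoneOn (fun x : ℝ => phiW l1 l2 m (x + t) / phiW l1 l2 m x) (Set.Ioi (0 : ℝ)) := by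
  intro t ht x hx y hy hxy
  simp only [Set.mem_Ioi] at hx hy
  have ha2 : (0:ℝ) < (l2 + m) ^ 2 + 4 * l1 * m := by positivity
  have ha : 0 < aW l1 l2 m := Real.sqrt_pos.mpr ha2
  set a := aW l1 l2 m with ha_def
  set b := 2 * l1 + l2 + m with hb_def
  have hC : 0 < 2 * l1 * (l1 + l2) / a := by positivity
  have hphi : ∀ u : ℝ, 0 < u → 0 < phiW l1 l2 m u := by
    intro u hu
    have hs : 0 < Real.sinh (a * u / 2) := Real.sinh_pos_iff.mpr (by positivity)
    have he : 0 < Real.exp (-((2 * l1 + l2 + m) * u / 2)) := Real.exp_pos _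
    unfold phiW
    rw [← ha_def]
    positivity
  simp only
  rw [div_le_div_iff₀ (hphi y hy) (hphi x hx)]
  unfold phiW
  rw [← ha_def, ← hb_def]
  have key : Real.sinh (a*(y+t)/2) * Real.sinh (a*x/2)
      ≤ Real.sinh (a*(x+t)/2) * Real.sinh (a*y/2) := by
    have e1 : a*(y+t)/2 = a*y/2 + a*t/2 := by ring
    have e2 : a*(x+t)/2 = a*x/2 + a*t/2 := by ring
    rw [e1, e2, Real.sinh_add, Real.sinh_add]
    have hT : 0 ≤ Real.sinh (a*t/2) := Real.sinh_nonneg_iff.mpr (by positivity)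
    have hd : 0 ≤ Real.sinh (a*y/2 - a*x/2) := Real.sinh_nonneg_iff.mpr (by nlinarith)
    rw [Real.sinh_sub] at hd
    nlinarith [mul_nonneg hT hd]
  have hexp : Real.exp (-(b*(y+t)/2)) * Real.exp (-(b*x/2))
      = Real.exp (-(b*(x+t)/2)) * Real.exp (-(b*y/2)) := by
    rw [← Real.exp_add, ← Real.exp_add]
    congr 1
    ring
  set C := 2 * l1 * (l1 + l2) / a with hC_def
  calc Real.exp (-(b*(y+t)/2)) * C * Real.sinh (a*(y+t)/2) *
        (Real.exp (-(b*x/2)) * C * Real.sinh (a*x/2))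
      = (Real.exp (-(b*(y+t)/2)) * Real.exp (-(b*x/2))) * (C*C) *
        (Real.sinh (a*(y+t)/2) * Real.sinh (a*x/2)) := by ring
    _ = (Real.exp (-(b*(x+t)/2)) * Real.exp (-(b*y/2))) * (C*C) *
        (Real.sinh (a*(y+t)/2) * Real.sinh (a*x/2)) := by rw [hexp]
    _ ≤ (Real.exp (-(b*(x+t)/2)) * Real.exp (-(b*y/2))) * (C*C) *
        (Real.sinh (a*(x+t)/2) * Real.sinh (a*y/2)) := by
          apply mul_le_mul_of_nonneg_left key
          positivity
    _ = Real.exp (-(b*(x+t)/2)) * C * Real.sinh (a*(x+t)/2) *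
        (Real.exp (-(b*y/2)) * C * Real.sinh (a*y/2)) := by ring
end

section
/- Let λ₁ > 0, λ₂ ≥ 0, μ > 0. Then the ratio t ↦ φ^C(t)/φ^W(t) is monotone increasing on (0, ∞); that is, τ^C ≥_lr τ^W, where τ^C and τ^W are the lifetimes of the Markovian cold and warm standby systems with the same principal-unit failure rate λ₁ and repair rate μ, the warm system's spare having failure rate λ₂. -/
/-- `b = sqrt(μ² + 4 λ μ)` for the cold standby system. -/
noncomputable def bC (l m : ℝ) : ℝ := Real.sqrt (m ^ 2 + 4 * l * m)

/-- Density of the lifetime of the Markovian two-unit cold standby system. -/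
noncomputable def phiC (l m t : ℝ) : ℝ :=
  Real.exp (-((2 * l + m) * t / 2)) * (2 * l ^ 2 / bC l m) * Real.sinh (bC l m * t / 2)

/-! After cancelling the prefactors, `φ^C / φ^W` is a positive constant times
`exp ((λ₂ + b - a) t / 2) * (1 - exp (-b t)) / (1 - exp (-a t))`. The exponent is nonnegative since
`a² - b² = λ₂ (λ₂ + 2μ)` and `a + b ≥ λ₂ + 2μ`. With `y = exp (-a t)`, the last factor is the secant
slope `(1 - y ^ (b / a)) / (1 - y)` of the concave function `y ↦ y ^ (b / a)` through `1`; it decreases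
in `y`, hence increases in `t`. -/

open Real Set

lemma exp_neg_mul_sinh (c d t : ℝ) :
    exp (-(c * t / 2)) * sinh (d * t / 2) = exp ((d - c) * t / 2) * (1 - exp (-(d * t))) / 2 := by
  rw [sinh_eq, show (d - c) * t / 2 = d * t / 2 + -(c * t / 2) by ring,
    show -(d * t) = -(d * t / 2) + -(d * t / 2) by ring, exp_add, exp_add, exp_neg (d * t / 2)]
  field_simp

lemma phiC_eq (l m t : ℝ) :
    phiC l m t = l ^ 2 / bC l m * exp ((bC l m - (2 * l + m)) * t / 2) * (1 - exp (-(bC l m * t))) := by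
  rw [phiC, mul_right_comm, exp_neg_mul_sinh]
  ring

lemma phiW_eq (l1 l2 m t : ℝ) :
    phiW l1 l2 m t = l1 * (l1 + l2) / aW l1 l2 m * exp ((aW l1 l2 m - (2 * l1 + l2 + m)) * t / 2) *
      (1 - exp (-(aW l1 l2 m * t))) := by
  rw [phiW, mul_right_comm, exp_neg_mul_sinh]
  ring

lemma bC_pos {l m : ℝ} (hl : 0 < l) (hm : 0 < m) : 0 < bC l m :=
  sqrt_pos.2 (by positivity)

lemma bC_le_aW {l1 l2 m : ℝ} (hl2 : 0 ≤ l2) (hm : 0 ≤ m) : bC l1 m ≤ aW l1 l2 m :=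
  sqrt_le_sqrt (by nlinarith)

lemma aW_le_bC_add {l1 l2 m : ℝ} (hl1 : 0 ≤ l1) (hl2 : 0 ≤ l2) (hm : 0 ≤ m) :
    aW l1 l2 m ≤ bC l1 m + l2 := by
  have hmb : m ≤ bC l1 m := le_sqrt_of_sq_le (by nlinarith)
  have hb2 : bC l1 m ^ 2 = m ^ 2 + 4 * l1 * m := sq_sqrt (by positivity)
  exact sqrt_le_iff.2 ⟨by linarith, by nlinarith⟩

lemma one_sub_exp_neg_mul_pos {c t : ℝ} (hc : 0 < c) (ht : 0 < t) : 0 < 1 - exp (-(c * t)) :=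
  sub_pos.2 (exp_lt_one_iff.2 (by nlinarith))

lemma monotoneOn_one_sub_exp_div_one_sub_exp {a b : ℝ} (hb : 0 < b) (hba : b ≤ a) :
    MonotoneOn (fun t => (1 - exp (-(b * t))) / (1 - exp (-(a * t)))) (Ioi 0) := by
  have ha : 0 < a := hb.trans_le hba
  have hslope : ∀ t, 0 < t → (1 - exp (-(b * t))) / (1 - exp (-(a * t))) =
      slope (fun y : ℝ => y ^ (b / a)) 1 (exp (-(a * t))) := by
    intro t _
    rw [slope_def_field, ← exp_mul, one_rpow, ← neg_div_neg_eq, neg_sub, neg_sub,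
      neg_mul, mul_right_comm, mul_div_cancel₀ _ ha.ne']
  have hmem : ∀ t, 0 < t → exp (-(a * t)) ∈ Ici (0 : ℝ) \ {1} := fun t ht =>
    ⟨(exp_pos _).le, (exp_lt_one_iff.2 (by nlinarith)).ne⟩
  intro s hs t ht hst
  dsimp only
  rw [hslope s hs, hslope t ht]
  exact (concaveOn_rpow (div_nonneg hb.le ha.le) ((div_le_one ha).2 hba)).slope_anti
    (by norm_num) (hmem t ht) (hmem s hs) (exp_le_exp.2 (by nlinarith))

theorem cold_lr_warm (l1 l2 m : ℝ) (h1 : 0 < l1) (h2 : 0 ≤ l2) (hm : 0 < m) :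
    MonotoneOn (fun t : ℝ => phiC l1 m t / phiW l1 l2 m t) (Set.Ioi (0 : ℝ)) := by
  set a := aW l1 l2 m
  set b := bC l1 m
  have hb : 0 < b := bC_pos h1 hm
  have hba : b ≤ a := bC_le_aW h2 hm.le
  have ha : 0 < a := hb.trans_le hba
  have hrate : 0 ≤ b - (2 * l1 + m) - (a - (2 * l1 + l2 + m)) := by
    linarith [aW_le_bC_add h1.le h2 hm.le]
  have hgrowth : MonotoneOn (fun t => exp ((b - (2 * l1 + m) - (a - (2 * l1 + l2 + m))) * t / 2))
      (Ioi 0) := fun s _ t _ hst => exp_le_exp.2 (by gcongr)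
  have hsat : ∀ t ∈ Ioi (0 : ℝ), 0 ≤ (1 - exp (-(b * t))) / (1 - exp (-(a * t))) := fun t ht =>
    (div_pos (one_sub_exp_neg_mul_pos hb ht) (one_sub_exp_neg_mul_pos ha ht)).le
  have hK : 0 ≤ l1 ^ 2 / b / (l1 * (l1 + l2) / a) := by positivity
  simp only [phiC_eq, phiW_eq, mul_div_mul_comm, ← exp_sub, ← sub_mul, ← sub_div]
  exact (monotoneOn_const.mul hgrowth (fun _ _ => hK) (fun _ _ => (exp_pos _).le)).mul
    (monotoneOn_one_sub_exp_div_one_sub_exp hb hba) (fun _ _ => mul_nonneg hK (exp_pos _).le) hsat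
end

section
/- Let m₁ ≥ m₂ ≥ 0 be real numbers and let p, q be real numbers with 0 ≤ p ≤ q ≤ 1 and p·q < 1. Then m₁ + (m₂ + q·m₁)/(1 − p·q) ≥ m₂ + (m₁ + p·m₂)/(1 − p·q). (Interpretation: for the general two-unit cold standby system, if E[X₁] ≥ E[X₂] and P(X₂ > Y₁) ≥ P(X₁ > Y₂), then E[τ₀^C] ≥ E[τ₃^C].) -/
theorem cold_standby_mean_sub_swap (m₁ m₂ p q : ℝ) (h : p * q ≠ 1) :
    m₁ + (m₂ + q * m₁) / (1 - p * q) - (m₂ + (m₁ + p * m₂) / (1 - p * q)) =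
      (q * (1 - p) * (m₁ - m₂) + (q - p) * m₂) / (1 - p * q) := by
  have hd : 1 - p * q ≠ 0 := sub_ne_zero.2 h.symm
  rw [eq_div_iff hd, sub_mul, add_mul, add_mul, div_mul_cancel₀ _ hd, div_mul_cancel₀ _ hd]
  ring

theorem lt_one_of_mul_lt_one_of_le {p q : ℝ} (hp : 0 ≤ p) (hpq : p ≤ q) (h : p * q < 1) :
    p < 1 := by
  nlinarith [mul_le_mul_of_nonneg_left hpq hp]

theorem cold_allocation_mean_general (m₁ m₂ p q : ℝ)
    (hm : m₁ ≥ m₂) (hm₂ : m₂ ≥ 0)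
    (hp : 0 ≤ p) (hpq : p ≤ q) (hpq1 : p * q < 1) :
    m₁ + (m₂ + q * m₁) / (1 - p * q) ≥ m₂ + (m₁ + p * m₂) / (1 - p * q) := by
  have hp1 : p < 1 := lt_one_of_mul_lt_one_of_le hp hpq hpq1
  rw [ge_iff_le, ← sub_nonneg, cold_standby_mean_sub_swap m₁ m₂ p q hpq1.ne]
  refine div_nonneg (add_nonneg ?_ ?_) (sub_nonneg.2 hpq1.le)
  · exact mul_nonneg (mul_nonneg (hp.trans hpq) (sub_nonneg.2 hp1.le)) (sub_nonneg.2 hm)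
  · exact mul_nonneg (sub_nonneg.2 hpq) hm₂

theorem cold_allocation_mean (m₁ m₂ p q : ℝ)
    (hm : m₁ ≥ m₂) (hm₂ : m₂ ≥ 0)
    (hp : 0 ≤ p) (hpq : p ≤ q) (hq : q ≤ 1) (hpq1 : p * q < 1) :
    m₁ + (m₂ + q * m₁) / (1 - p * q) ≥ m₂ + (m₁ + p * m₂) / (1 - p * q) :=
  cold_allocation_mean_general m₁ m₂ p q hm hm₂ hp hpq hpq1
end

section
/- Let m₁₁ ≥ m₂₁ ≥ 0 and m₁₂ ≥ m₂₂ ≥ 0 be real numbers, and let p₁, p₂, q₁, q₂ satisfy 0 ≤ p₂ ≤ p₁ ≤ 1, 0 ≤ q₂ ≤ q₁ ≤ 1 and p₁·q₁ < 1. Then m₁₁ + (m₁₂ + q₁·m₁₁)/(1 − p₁·q₁) ≥ m₂₁ + (m₂₂ + q₂·m₂₁)/(1 − p₂·q₂). (Interpretation: if E[X₁₁] ≥ E[X₂₁], E[X₁₂] ≥ E[X₂₂], P(X₁₁ > Y₁₂) ≥ P(X₂₁ > Y₂₂) and P(X₁₂ > Y₁₁) ≥ P(X₂₂ > Y₂₁),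 then E[τ^C_{(1)}] ≥ E[τ^C_{(2)}].) -/
theorem cold_expected_comparison (m₁₁ m₂₁ m₁₂ m₂₂ p₁ p₂ q₁ q₂ : ℝ)
    (h1 : m₁₁ ≥ m₂₁) (h1' : m₂₁ ≥ 0) (h2 : m₁₂ ≥ m₂₂) (h2' : m₂₂ ≥ 0)
    (hp0 : 0 ≤ p₂) (hp : p₂ ≤ p₁) (hp1 : p₁ ≤ 1)
    (hq0 : 0 ≤ q₂) (hq : q₂ ≤ q₁) (hq1 : q₁ ≤ 1)
    (hpq : p₁ * q₁ < 1) :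
    m₁₁ + (m₁₂ + q₁ * m₁₁) / (1 - p₁ * q₁) ≥
      m₂₁ + (m₂₂ + q₂ * m₂₁) / (1 - p₂ * q₂) := by
  have hle : p₂ * q₂ ≤ p₁ * q₁ := mul_le_mul hp hq hq0 (le_trans hp0 hp)
  have hd1 : 0 < 1 - p₁ * q₁ := by linarith
  have hd2 : 0 < 1 - p₂ * q₂ := by linarith
  have hnum : m₂₂ + q₂ * m₂₁ ≤ m₁₂ + q₁ * m₁₁ := by nlinarith
  have h0 : 0 ≤ m₁₂ + q₁ * m₁₁ := by nlinarith
  have := div_le_div₀ h0 hnum hd1 (show 1 - p₁ * q₁ ≤ 1 - p₂ * q₂ by linarith)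
  linarith
end

section
/- Let λ₁, λ₂, μ > 0 be real numbers. Then for every real s: (s + λ₂)(s + λ₁ + μ)(s + λ₂ + μ) + λ₁(s + λ₂)(s + λ₁ + μ) + λ₁μ(s + λ₁ + λ₂ + μ) = (s + λ₁)(s + λ₂ + μ)(s + λ₁ + μ) + λ₂(s + λ₁)(s + λ₂ + μ) + λ₂μ(s + λ₁ + λ₂ + μ). Consequently, when the two units of a cold standby system with exponentially distributed lifetimes (rates λ₁, λ₂) have equal repair rates μ₁ = μ₂ = μ, the Laplace transforms of the survival functions of τ₀^C and τ₃^C coincide, so τ₀^C and τ₃^C are equal in distribution. -/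
theorem cold_equal_repair_rates_eq_dist (l1 l2 m : ℝ)
    (h1 : 0 < l1) (h2 : 0 < l2) (hm : 0 < m) :
    ∀ s : ℝ,
      ((s + l2) * (s + l1 + m) * (s + l2 + m) + l1 * (s + l2) * (s + l1 + m) +
          l1 * m * (s + l1 + l2 + m) =
        (s + l1) * (s + l2 + m) * (s + l1 + m) + l2 * (s + l1) * (s + l2 + m) +
          l2 * m * (s + l1 + l2 + m)) ∧
      (((s + l2) * (s + l1 + m) * (s + l2 + m) + l1 * (s + l2) * (s + l1 + m) +
            l1 * m * (s + l1 + l2 + m)) /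
          ((s + l1) * (s + l2) * (s + l1 + m) * (s + l2 + m) - l1 * l2 * m * m) =
        ((s + l1) * (s + l2 + m) * (s + l1 + m) + l2 * (s + l1) * (s + l2 + m) +
            l2 * m * (s + l1 + l2 + m)) /
          ((s + l2) * (s + l1) * (s + l2 + m) * (s + l1 + m) - l2 * l1 * m * m)) := by
  intro s
  constructor
  · ring
  · rw [show (s + l2) * (s + l1) * (s + l2 + m) * (s + l1 + m) - l2 * l1 * m * m =
      (s + l1) * (s + l2) * (s + l1 + m) * (s + l2 + m) - l1 * l2 * m * m by ring]
    congr 1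
    ring
end
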